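/- Let n ≥ 2, let H be a digraph, and let f : V(C⃗_n[H]) → Fin ℓ be a coloring of the lexicographic product C⃗_n[H] such that, for each i ∈ ZMod n, the restriction of f to the copy H_i = {i} × V(H) has all its color classes acyclic in H_i. Then f is an acyclic coloring of C⃗_n[H] (every color class is acyclic in C⃗_n[H]) if and only if for every color c ∈ Fin ℓ there exists i ∈ ZMod n such that c is not used by f on H_i. -/

import Mathlib

/-- A directed cycle in the digraph with arc relation `Adj`: a list of at least two
distinct vertices with an arc between consecutive vertices and an arc from the last
vertex back to the first. -/
def IsDicycle {V : Type*} (Adj : V → V → Prop) (l : List V) : Prop :=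
  2 ≤ l.length ∧ l.Nodup ∧ l.Chain' Adj ∧
    ∀ h : l ≠ [], Adj (l.getLast h) (l.head h)

/-- A set of vertices is acyclic if the induced subdigraph contains no directed cycle. -/
def AcyclicSet {V : Type*} (Adj : V → V → Prop) (S : Set V) : Prop :=
  ¬ ∃ l : List V, (∀ v ∈ l, v ∈ S) ∧ IsDicycle Adj l

/-- A coloring is acyclic if every color class is an acyclic set. -/
def IsAcyclicColoring {V C : Type*} (Adj : V → V → Prop) (f : V → C) : Prop :=
  ∀ c : C, AcyclicSet Adj (f ⁻¹' {c})

/-- The dichromatic number: the least `k` admitting an acyclic `k`-coloring. -/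
noncomputable def dichromaticNumber {V : Type*} (Adj : V → V → Prop) : ℕ :=
  sInf {k : ℕ | ∃ f : V → Fin k, IsAcyclicColoring Adj f}

/-- Cartesian product of digraphs. -/
def cartAdj {V W : Type*} (GA : V → V → Prop) (HA : W → W → Prop) :
    V × W → V × W → Prop :=
  fun p q => (p.1 = q.1 ∧ HA p.2 q.2) ∨ (GA p.1 q.1 ∧ p.2 = q.2)

/-- Direct product of digraphs. -/
def directAdj {V W : Type*} (GA : V → V → Prop) (HA : W → W → Prop) :
    V × W → V × W → Prop :=
  fun p q => GA p.1 q.1 ∧ HA p.2 q.2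

/-- Strong product of digraphs. -/
def strongAdj {V W : Type*} (GA : V → V → Prop) (HA : W → W → Prop) :
    V × W → V × W → Prop :=
  fun p q => (p.1 = q.1 ∧ HA p.2 q.2) ∨ (GA p.1 q.1 ∧ p.2 = q.2) ∨
    (GA p.1 q.1 ∧ HA p.2 q.2)

/-- Lexicographic product of digraphs. -/
def lexAdj {V W : Type*} (GA : V → V → Prop) (HA : W → W → Prop) :
    V × W → V × W → Prop :=
  fun p q => GA p.1 q.1 ∨ (p.1 = q.1 ∧ HA p.2 q.2)

/-- The dicycle on `n` vertices: arcs `i → i + 1` on `ZMod n`. -/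
def dicycleAdj (n : ℕ) : ZMod n → ZMod n → Prop := fun i j => j = i + 1

/-- The complete digraph on `k` vertices. -/
def completeAdj (k : ℕ) : Fin k → Fin k → Prop := fun i j => i ≠ j


/-! A directed cycle of `C⃗ₙ[H]` that misses some layer `Hᵢ` stays inside one layer: along
the cycle the distance `(v.1 - i).val` never decreases, since a step from a layer `j ≠ i`
to `j + 1` does not wrap around `i`, so it is constant and the cycle lies in a single copy
of `H`, where no colour class has a cycle. Conversely, one vertex of colour `c` in every
layer, taken in the order of `ℤ/n`, forms a directed cycle of colour `c`. -/

theorem ZMod.val_le_val_add_one {n : ℕ} [NeZero n] {a : ZMod n} (h : a + 1 ≠ 0) :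
    a.val ≤ (a + 1).val := by
  rcases lt_or_ge (a.val + (1 : ZMod n).val) n with hlt | hge
  · rw [ZMod.val_add_of_lt hlt]
    omega
  · have hval := ZMod.val_add_val_of_le hge
    have : (a + 1).val ≠ 0 := (ZMod.val_ne_zero _).mpr h
    have := ZMod.val_lt a
    have := (ZMod.val_one_eq_one_mod n).trans_le (Nat.mod_le 1 n)
    omega

instance {n : ℕ} [Fact (1 < n)] : Std.Irrefl (dicycleAdj n) :=
  ⟨fun _ h => one_ne_zero (left_eq_add.mp h)⟩

section IsDicycle

variable {V W : Type*}

theorem IsDicycle.ne_nil {Adj : V → V → Prop} {l : List V} (hl : IsDicycle Adj l) : l ≠ [] := by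
  rintro rfl
  simpa using hl.1

theorem IsDicycle.map {AdjV : V → V → Prop} {AdjW : W → W → Prop} {l : List V}
    (hl : IsDicycle AdjV l) (g : V → W) (hg : ∀ u ∈ l, ∀ v ∈ l, g u = g v → u = v)
    (hadj : ∀ u ∈ l, ∀ v ∈ l, AdjV u v → AdjW (g u) (g v)) :
    IsDicycle AdjW (l.map g) := by
  obtain ⟨hlen, hnodup, hchain, hclose⟩ := hl
  refine ⟨by simpa using hlen, hnodup.map_on hg, (List.isChain_map g).mpr <|
    hchain.imp_of_mem_imp fun u v hu hv => hadj u hu v hv, fun hne => ?_⟩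
  rw [List.getLast_map, List.head_map]
  exact hadj _ (List.getLast_mem _) _ (List.head_mem _) (hclose _)

theorem IsDicycle.apply_eq_of_le {α : Type*} [PartialOrder α] {Adj : V → V → Prop}
    {l : List V} (hl : IsDicycle Adj l) (φ : V → α)
    (hφ : ∀ u ∈ l, ∀ v ∈ l, Adj u v → φ u ≤ φ v) {u v : V} (hu : u ∈ l) (hv : v ∈ l) :
    φ u = φ v := by
  have hne := hl.ne_nil
  obtain ⟨-, -, hchain, hclose⟩ := hl
  have hsorted : (l.map φ).Pairwise (· ≤ ·) := List.isChain_iff_pairwise.mp <|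
    (List.isChain_map φ).mpr (hchain.imp_of_mem_imp fun u v hu hv => hφ u hu v hv)
  have hmne : l.map φ ≠ [] := by simpa using hne
  have key : ∀ w ∈ l, φ w = φ (l.head hne) := fun w hw => le_antisymm
    (calc φ w ≤ φ (l.getLast hne) := by
            rw [← List.getLast_map hmne]
            exact hsorted.rel_getLast (List.mem_map_of_mem hw)
      _ ≤ φ (l.head hne) := hφ _ (List.getLast_mem _) _ (List.head_mem _) (hclose hne))
    (by
      rw [← List.head_map hmne]
      exact hsorted.rel_head (List.mem_map_of_mem hw))
  rw [key u hu, key v hv]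

theorem IsDicycle.lexAdj_graph {GA : V → V → Prop} {l : List V} (hl : IsDicycle GA l)
    (HA : W → W → Prop) (x : V → W) : IsDicycle (lexAdj GA HA) (l.map fun v => (v, x v)) :=
  hl.map _ (fun _ _ _ _ h => congrArg Prod.fst h) (fun _ _ _ _ h => Or.inl h)

theorem IsDicycle.map_snd_of_fst_eq {GA : V → V → Prop} {HA : W → W → Prop}
    [Std.Irrefl GA] {l : List (V × W)} (hl : IsDicycle (lexAdj GA HA) l)
    (hfst : ∀ u ∈ l, ∀ v ∈ l, u.1 = v.1) : IsDicycle HA (l.map Prod.snd) :=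
  hl.map _ (fun u hu v hv h => Prod.ext (hfst u hu v hv) h) fun u hu v hv h =>
    (h.resolve_left fun h' => Std.Irrefl.irrefl u.1 (by rwa [← hfst u hu v hv] at h')).2

theorem isDicycle_dicycleAdj_range {n : ℕ} (hn : 2 ≤ n) :
    IsDicycle (dicycleAdj n) ((List.range n).map (Nat.cast : ℕ → ZMod n)) := by
  refine ⟨by simpa using hn, List.nodup_range.map_on fun a ha b hb h => ?_, ?_, fun hne => ?_⟩
  · simp only [List.mem_range] at ha hb
    simpa [ZMod.val_natCast_of_lt ha, ZMod.val_natCast_of_lt hb] using congrArg ZMod.val h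
  · rw [List.Chain', List.isChain_map, List.isChain_range]
    intro m _
    simp [dicycleAdj]
  · rw [List.getLast_map, List.head_map, List.getLast_range, List.head_range]
    simp only [dicycleAdj, Nat.cast_zero]
    rw [← Nat.cast_add_one, Nat.sub_add_cancel (by omega), ZMod.natCast_self]

theorem IsDicycle.fst_eq_of_forall_fst_ne {n : ℕ} [NeZero n] {HA : W → W → Prop}
    {l : List (ZMod n × W)} (hl : IsDicycle (lexAdj (dicycleAdj n) HA) l) {i : ZMod n}
    (hi : ∀ v ∈ l, v.1 ≠ i) {u v : ZMod n × W} (hu : u ∈ l) (hv : v ∈ l) : u.1 = v.1 := by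
  have hdist : ∀ u ∈ l, ∀ v ∈ l, lexAdj (dicycleAdj n) HA u v →
      (u.1 - i).val ≤ (v.1 - i).val := by
    rintro a - b hb (hstep | ⟨hsame, -⟩)
    · have hshift : b.1 - i = a.1 - i + 1 := by rw [hstep]; ring
      rw [hshift]
      exact ZMod.val_le_val_add_one (hshift ▸ sub_ne_zero.mpr (hi b hb))
    · rw [hsame]
  simpa using ZMod.val_injective n (hl.apply_eq_of_le _ hdist hu hv)

end IsDicycle

theorem stmt15_general {W : Type*} (n : ℕ) (hn : 2 ≤ n)
    (HA : W → W → Prop)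
    (ℓ : ℕ) (f : ZMod n × W → Fin ℓ)
    (hres : ∀ i : ZMod n, ∀ c : Fin ℓ, AcyclicSet HA {x : W | f (i, x) = c}) :
    IsAcyclicColoring (lexAdj (dicycleAdj n) HA) f ↔
      ∀ c : Fin ℓ, ∃ i : ZMod n, ∀ x : W, f (i, x) ≠ c := by
  have : Fact (1 < n) := ⟨hn⟩
  constructor
  · intro hacyclic c
    by_contra! hused
    choose x hx using hused
    exact hacyclic c ⟨_, by simpa using fun (a : ℕ) _ => hx a,
      (isDicycle_dicycleAdj_range hn).lexAdj_graph HA x⟩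
  · rintro hmiss c ⟨l, hcol, hl⟩
    obtain ⟨i, hi⟩ := hmiss c
    have hlayer : ∀ v ∈ l, v.1 ≠ i := fun v hv hvi => hi v.2 (hvi ▸ hcol v hv)
    have hfst : ∀ u ∈ l, ∀ v ∈ l, u.1 = v.1 := fun u hu v hv =>
      hl.fst_eq_of_forall_fst_ne hlayer hu hv
    obtain ⟨w, hw⟩ := List.exists_mem_of_ne_nil l hl.ne_nil
    refine hres w.1 c ⟨_, ?_, hl.map_snd_of_fst_eq hfst⟩
    simp only [List.mem_map, Set.mem_ofPred_eq]
    rintro _ ⟨v, hv, rfl⟩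
    rw [← hfst v hv w hw]
    exact hcol v hv

theorem stmt15 {W : Type*} (n : ℕ) (hn : 2 ≤ n)
    (HA : W → W → Prop) (hH : Irreflexive HA)
    (ℓ : ℕ) (f : ZMod n × W → Fin ℓ)
    (hres : ∀ i : ZMod n, ∀ c : Fin ℓ, AcyclicSet HA {x : W | f (i, x) = c}) :
    IsAcyclicColoring (lexAdj (dicycleAdj n) HA) f ↔
      ∀ c : Fin ℓ, ∃ i : ZMod n, ∀ x : W, f (i, x) ≠ c :=
  stmt15_general n hn HA ℓ f hres
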